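/- Let q_0, …, q_n be positive integers. For a nonempty subset I ⊆ {0,…,n} define l_I = (Π_{i∈I} q_i)/gcd(q_i : i ∈ I), and for 0 ≤ k ≤ n define l_k = lcm{ l_I : |I| = k+1 }. Then for all i, j ≥ 0 with i + j ≤ n, l_{i+j} divides l_i · l_j. -/

import Mathlib

/-!
Split a `(i+j+1)`-set `K` as `I ∪ J` with `|I| = i+1`, `|J| = j+1` and `I ∩ J = {m}`.
Writing `P` for products and `g` for gcds, `g_K = gcd(g_I, g_J)`, so
`l_K · g_I g_J = P_K · lcm(g_I, g_J)` while `l_I l_J · g_I g_J = P_I P_J = P_K · q_m`;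
and `lcm(g_I, g_J) ∣ q_m` because both gcds divide `q_m`. Hence `l_K ∣ l_I l_J ∣ l_i l_j`.
-/

namespace Finset

theorem exists_union_eq_inter_eq_singleton {α : Type*} [DecidableEq α] {K : Finset α} {a b : ℕ}
    (hK : #K = a + b + 1) :
    ∃ I J : Finset α, ∃ m : α, #I = a + 1 ∧ #J = b + 1 ∧ I ∪ J = K ∧ I ∩ J = {m} := by
  obtain ⟨I, hIK, hI⟩ := exists_subset_card_eq (show a + 1 ≤ #K by omega)
  obtain ⟨m, hmI⟩ : I.Nonempty := card_pos.mp (by omega)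
  have hm : m ∉ K \ I := fun h => (mem_sdiff.mp h).2 hmI
  refine ⟨I, insert m (K \ I), m, hI, ?_, ?_, ?_⟩
  · rw [card_insert_of_notMem hm, card_sdiff_of_subset hIK]
    omega
  · rw [union_insert, insert_eq_self.mpr (mem_union_left _ hmI), union_sdiff_of_subset hIK]
  · rw [inter_insert_of_mem hmI, inter_sdiff_self, insert_empty]

theorem gcd_dvd_prod {α : Type*} {I : Finset α} {m : α} (hm : m ∈ I) (q : α → ℕ) :
    I.gcd q ∣ ∏ x ∈ I, q x :=
  (gcd_dvd hm).trans (dvd_prod_of_mem q hm)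

end Finset

open Finset

/-- The number `l_I` of the paper. -/
def reducedProd {α : Type*} (q : α → ℕ) (I : Finset α) : ℕ :=
  (∏ x ∈ I, q x) / I.gcd q

theorem reducedProd_mul_gcd {α : Type*} (q : α → ℕ) {I : Finset α} {m : α} (hm : m ∈ I) :
    reducedProd q I * I.gcd q = ∏ x ∈ I, q x :=
  Nat.div_mul_cancel (gcd_dvd_prod hm q)

theorem reducedProd_union_dvd {α : Type*} [DecidableEq α] (q : α → ℕ) {I J : Finset α} {m : α}
    (hIJ : I ∩ J = {m}) :
    reducedProd q (I ∪ J) ∣ reducedProd q I * reducedProd q J := by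
  have hm : m ∈ I ∩ J := hIJ ▸ mem_singleton_self m
  obtain ⟨hmI, hmJ⟩ := mem_inter.mp hm
  -- a vanishing gcd makes the right side `_ / 0 = 0`
  rcases Nat.eq_zero_or_pos (I.gcd q) with hI | hI
  · simp [reducedProd, hI]
  rcases Nat.eq_zero_or_pos (J.gcd q) with hJ | hJ
  · simp [reducedProd, hJ]
  rw [← Nat.mul_dvd_mul_iff_right (Nat.mul_pos hI hJ)]
  have hgcd : (I ∪ J).gcd q = Nat.gcd (I.gcd q) (J.gcd q) := gcd_union
  have hleft : reducedProd q (I ∪ J) * (I.gcd q * J.gcd q)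
      = (∏ x ∈ I ∪ J, q x) * Nat.lcm (I.gcd q) (J.gcd q) := by
    rw [← Nat.gcd_mul_lcm (I.gcd q), ← hgcd, ← mul_assoc,
      reducedProd_mul_gcd q (mem_union_left J hmI)]
  have hright : reducedProd q I * reducedProd q J * (I.gcd q * J.gcd q)
      = (∏ x ∈ I ∪ J, q x) * q m := by
    rw [mul_mul_mul_comm, reducedProd_mul_gcd q hmI, reducedProd_mul_gcd q hmJ,
      ← prod_union_inter, hIJ, prod_singleton]
  rw [hleft, hright]
  exact mul_dvd_mul_left _ (Nat.lcm_dvd (gcd_dvd hmI) (gcd_dvd hmJ))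

theorem stmt_14_general (n : ℕ) (q : Fin (n + 1) → ℕ) :
    ∀ i j : ℕ, i + j ≤ n →
      ((Finset.univ.powersetCard (i + j + 1)).lcm
          (fun I => (∏ x ∈ I, q x) / I.gcd q)) ∣
        ((Finset.univ.powersetCard (i + 1)).lcm
            (fun I => (∏ x ∈ I, q x) / I.gcd q)) *
          ((Finset.univ.powersetCard (j + 1)).lcm
            (fun I => (∏ x ∈ I, q x) / I.gcd q)) := by
  intro i j _
  refine Finset.lcm_dvd fun K hK => ?_
  obtain ⟨I, J, m, hI, hJ, rfl, hIJ⟩ :=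
    exists_union_eq_inter_eq_singleton (mem_powersetCard.mp hK).2
  calc reducedProd q (I ∪ J)
      ∣ reducedProd q I * reducedProd q J := reducedProd_union_dvd q hIJ
    _ ∣ _ := mul_dvd_mul
        (dvd_lcm (f := reducedProd q) (mem_powersetCard.mpr ⟨subset_univ I, hI⟩))
        (dvd_lcm (f := reducedProd q) (mem_powersetCard.mpr ⟨subset_univ J, hJ⟩))

/-- With l_I = (∏_{i∈I} q_i)/gcd(q_i : i∈I) and l_k = lcm of the l_I over
(k+1)-subsets, the structure constants of H^*(P(Q)) are integral:
l_{i+j} ∣ l_i · l_j for i + j ≤ n. -/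
theorem stmt_14 (n : ℕ) (q : Fin (n + 1) → ℕ) (hq : ∀ i, 0 < q i) :
    ∀ i j : ℕ, i + j ≤ n →
      ((Finset.univ.powersetCard (i + j + 1)).lcm
          (fun I => (∏ x ∈ I, q x) / I.gcd q)) ∣
        ((Finset.univ.powersetCard (i + 1)).lcm
            (fun I => (∏ x ∈ I, q x) / I.gcd q)) *
          ((Finset.univ.powersetCard (j + 1)).lcm
            (fun I => (∏ x ∈ I, q x) / I.gcd q)) :=
  stmt_14_general n q
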